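/- arXiv:2605.22515 — 2 statements merged into one kernel-verified Lean document; each statement's English description precedes it below -/
import Mathlib

section
/- If z₁ = e^{2iθ} ∈ T and z₂ = ψ_α(z₁) = e^{2iθ'} with g(θ') = g(θ) + a, a = g(α), then the distance from the point z₃ = (dn a − 1)/(dn a + 1) to the chord z₁z₂ equals 2 cn a/(dn a + 1); i.e., the chord is tangent to the circle C_a. -/
noncomputable def g (k θ : ℝ) : ℝ := ∫ t in (0:ℝ)..θ, 1 / Real.sqrt (1 - k^2 * Real.sin t ^ 2)

/-- `K` is the complete elliptic integral `g(π/2)`. -/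
noncomputable def KK (k : ℝ) : ℝ := g k (Real.pi / 2)

/-- The amplitude function, inverse of `g`. -/
noncomputable def am (k : ℝ) : ℝ → ℝ := Function.invFun (g k)

noncomputable def cn (k u : ℝ) : ℝ := Real.cos (am k u)
noncomputable def sn (k u : ℝ) : ℝ := Real.sin (am k u)
noncomputable def dn (k u : ℝ) : ℝ := Real.sqrt (1 - k^2 * sn k u ^ 2)

section analysis
variable {k : ℝ} (hk : k^2 < 1)
include hk

lemma arg_pos (θ : ℝ) : 0 < 1 - k^2 * Real.sin θ ^ 2 := by
  nlinarith [Real.sin_sq_le_one θ, sq_nonneg (k * Real.sin θ), sq_nonneg k]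

lemma delta_pos (θ : ℝ) : 0 < Real.sqrt (1 - k^2 * Real.sin θ ^ 2) :=
  Real.sqrt_pos.2 (arg_pos hk θ)

omit hk in
lemma delta_le_one (θ : ℝ) : Real.sqrt (1 - k^2 * Real.sin θ ^ 2) ≤ 1 := by
  exact Real.sqrt_le_one.2 (by nlinarith [sq_nonneg (k * Real.sin θ)])

lemma integrand_cont : Continuous (fun t : ℝ => 1 / Real.sqrt (1 - k^2 * Real.sin t ^ 2)) := by
  apply Continuous.div continuous_const
  · exact (Real.continuous_sqrt).comp (by continuity)
  · exact fun t => (delta_pos hk t).ne'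

lemma g_hasDerivAt (θ : ℝ) :
    HasDerivAt (g k) (1 / Real.sqrt (1 - k^2 * Real.sin θ ^ 2)) θ := by
  exact intervalIntegral.integral_hasDerivAt_right
    ((integrand_cont hk).intervalIntegrable _ _)
    ((integrand_cont hk).stronglyMeasurableAtFilter _ _)
    (integrand_cont hk).continuousAt

lemma g_strictMono : StrictMono (g k) := by
  apply strictMono_of_deriv_pos
  intro θ
  rw [(g_hasDerivAt hk θ).deriv]
  exact div_pos one_pos (delta_pos hk θ)

omit hk in
lemma g_zero : g k 0 = 0 := intervalIntegral.integral_same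

lemma g_sub_mono : Monotone (fun θ => g k θ - θ) := by
  apply monotone_of_deriv_nonneg
  · exact fun θ => ((g_hasDerivAt hk θ).sub (hasDerivAt_id θ)).differentiableAt
  · intro θ
    have hd : HasDerivAt (fun θ => g k θ - θ) (1 / Real.sqrt (1 - k^2 * Real.sin θ ^ 2) - 1) θ :=
      (g_hasDerivAt hk θ).sub (hasDerivAt_id θ)
    rw [hd.deriv]
    have h1 := delta_pos hk θ
    have h2 := delta_le_one (k:=k) θ
    have : (1:ℝ) ≤ 1 / Real.sqrt (1 - k^2 * Real.sin θ ^ 2) := by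
      rw [le_div_iff₀ h1]; linarith
    linarith

lemma g_ge (θ : ℝ) (h : 0 ≤ θ) : θ ≤ g k θ := by
  have := g_sub_mono hk h
  simp only [g_zero] at this
  linarith

lemma g_le (θ : ℝ) (h : θ ≤ 0) : g k θ ≤ θ := by
  have := g_sub_mono hk h
  simp only [g_zero] at this
  linarith

lemma g_surjective : Function.Surjective (g k) := by
  have hcont : Continuous (g k) := continuous_iff_continuousAt.2 fun θ => (g_hasDerivAt hk θ).continuousAt
  apply Continuous.surjective hcont
  · apply Filter.tendsto_atTop_mono' _ _ Filter.tendsto_id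
    filter_upwards [Filter.eventually_ge_atTop (0:ℝ)] with θ hθ
    exact g_ge hk θ hθ
  · apply Filter.tendsto_atBot_mono' _ _ Filter.tendsto_id
    filter_upwards [Filter.eventually_le_atBot (0:ℝ)] with θ hθ
    exact g_le hk θ hθ

lemma am_g (θ : ℝ) : am k (g k θ) = θ :=
  Function.leftInverse_invFun (g_strictMono hk).injective θ

lemma g_am (u : ℝ) : g k (am k u) = u :=
  Function.invFun_eq (g_surjective hk u)

lemma am_zero : am k 0 = 0 := by
  have := am_g hk 0
  rwa [g_zero] at this

lemma am_hasDerivAt (u : ℝ) :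
    HasDerivAt (am k) (Real.sqrt (1 - k^2 * Real.sin (am k u) ^ 2)) u := by
  have hcont : Continuous (am k) := by
    have hmono : Monotone (am k) := by
      intro x y hxy
      by_contra hlt
      push_neg at hlt
      have := (g_strictMono hk) hlt
      rw [g_am hk, g_am hk] at this
      linarith
    have hsurj : Function.Surjective (am k) := fun θ => ⟨g k θ, am_g hk θ⟩
    exact hmono.continuous_of_surjective hsurj
  have h := HasDerivAt.of_local_left_inverse hcont.continuousAt
    (g_hasDerivAt hk (am k u)) (one_div_pos.2 (delta_pos hk _)).ne'
    (Filter.Eventually.of_forall (g_am hk))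
  rw [one_div, inv_inv] at h
  exact h

omit hk in
lemma dn_eq_delta (u : ℝ) : dn k u = Real.sqrt (1 - k^2 * Real.sin (am k u) ^ 2) := rfl

omit hk in
lemma sn_cn_sq (u : ℝ) : sn k u ^ 2 + cn k u ^ 2 = 1 := Real.sin_sq_add_cos_sq _

lemma dn_pos (u : ℝ) : 0 < dn k u := delta_pos hk _

lemma dn_sq (u : ℝ) : dn k u ^ 2 = 1 - k^2 * sn k u ^ 2 :=
  Real.sq_sqrt (le_of_lt (arg_pos hk _))

lemma sn_hasDerivAt (u : ℝ) : HasDerivAt (sn k) (cn k u * dn k u) u := by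
  have h := (Real.hasDerivAt_sin (am k u)).comp u (am_hasDerivAt hk u)
  exact h

lemma cn_hasDerivAt (u : ℝ) : HasDerivAt (cn k) (-(sn k u * dn k u)) u := by
  have h := (Real.hasDerivAt_cos (am k u)).comp u (am_hasDerivAt hk u)
  exact h.congr_deriv (by simp [sn, dn_eq_delta])

lemma dn_hasDerivAt (u : ℝ) : HasDerivAt (dn k) (-(k^2 * sn k u * cn k u)) u := by
  have hinner : HasDerivAt (fun u => 1 - k^2 * sn k u ^ 2)
      (-(k^2 * (2 * sn k u * (cn k u * dn k u)))) u := by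
    have := ((sn_hasDerivAt hk u).pow 2).const_mul (k^2)
    have h2 := (hasDerivAt_const u (1:ℝ)).sub this
    exact h2.congr_deriv (by ring)
  have h := (Real.hasDerivAt_sqrt (arg_pos hk (am k u)).ne').comp u hinner
  refine h.congr_deriv ?_
  have hd := (dn_pos hk u).ne'
  rw [← dn_eq_delta]
  field_simp

lemma sn_zero : sn k 0 = 0 := by simp [sn, am_zero hk]
lemma cn_zero : cn k 0 = 1 := by simp [cn, am_zero hk]
lemma dn_zero : dn k 0 = 1 := by simp [dn, sn_zero hk]

lemma B_pos (x y : ℝ) : 0 < 1 - k^2 * Real.sin x ^ 2 * Real.sin y ^ 2 := by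
  have h1 : Real.sin x ^ 2 * Real.sin y ^ 2 ≤ 1 :=
    mul_le_one₀ (Real.sin_sq_le_one x) (sq_nonneg _) (Real.sin_sq_le_one y)
  nlinarith [sq_nonneg (Real.sin x * Real.sin y), sq_nonneg k]

lemma Bsn_pos (u v : ℝ) : 0 < 1 - k^2 * sn k u ^ 2 * sn k v ^ 2 := B_pos hk (am k u) (am k v)

omit hk in
lemma shift_deriv {f : ℝ → ℝ} {f' : ℝ} (w u : ℝ) (h : HasDerivAt f f' (u + w)) :
    HasDerivAt (fun x => f (x + w)) f' u := by
  have := h.comp u ((hasDerivAt_id u).add_const w)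
  simp only [mul_one] at this
  exact this

lemma cn_dn_add (w u : ℝ) :
    cn k u * cn k (u+w) + sn k u * sn k (u+w) * (dn k u * dn k (u+w)) =
      cn k w * (1 - k^2 * sn k u ^ 2 * sn k (u+w) ^ 2) ∧
    dn k u * dn k (u+w) + k^2 * (sn k u * sn k (u+w)) * (cn k u * cn k (u+w)) =
      dn k w * (1 - k^2 * sn k u ^ 2 * sn k (u+w) ^ 2) := by
  set C : ℝ → ℝ := fun x => cn k x * cn k (x+w) + sn k x * sn k (x+w) * (dn k x * dn k (x+w))
    with hCdef
  set D : ℝ → ℝ := fun x => dn k x * dn k (x+w) + k^2 * (sn k x * sn k (x+w)) * (cn k x * cn k (x+w))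
    with hDdef
  set B : ℝ → ℝ := fun x => 1 - k^2 * sn k x ^ 2 * sn k (x+w) ^ 2 with hBdef
  have hBpos : ∀ x, 0 < B x := fun x => Bsn_pos hk x (x+w)
  have main : ∀ (F : ℝ → ℝ), (∀ x, HasDerivAt (fun y => F y / B y) 0 x) → ∀ x, F x = F 0 * B x := by
    intro F hF x
    have hconst : F x / B x = F 0 / B 0 :=
      is_const_of_deriv_eq_zero (fun y => (hF y).differentiableAt) (fun y => (hF y).deriv) x 0
    have hB0 : B 0 = 1 := by simp [hBdef, sn_zero hk]
    rw [hB0, div_one, div_eq_iff (hBpos x).ne'] at hconst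
    exact hconst
  have derivs : ∀ x, HasDerivAt (fun y => C y / B y) 0 x ∧ HasDerivAt (fun y => D y / B y) 0 x := by
    intro u
    have hs1 := sn_hasDerivAt hk u
    have hc1 := cn_hasDerivAt hk u
    have hd1 := dn_hasDerivAt hk u
    have hs2 := shift_deriv w u (sn_hasDerivAt hk (u+w))
    have hc2 := shift_deriv w u (cn_hasDerivAt hk (u+w))
    have hd2 := shift_deriv w u (dn_hasDerivAt hk (u+w))
    have hB : HasDerivAt B (0 - (k^2 * (2 * sn k u ^ 1 * (cn k u * dn k u)) * sn k (u+w)^2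
        + k^2 * sn k u ^2 * (2 * sn k (u+w) ^ 1 * (cn k (u+w) * dn k (u+w))))) u :=
      (hasDerivAt_const u (1:ℝ)).sub (((hs1.pow 2).const_mul (k^2)).mul (hs2.pow 2))
    have hC := (hc1.mul hc2).add ((hs1.mul hs2).mul (hd1.mul hd2))
    have hD := (hd1.mul hd2).add (((hs1.mul hs2).const_mul (k^2)).mul (hc1.mul hc2))
    have hBne := (hBpos u).ne'
    set s1 := sn k u; set c1 := cn k u; set d1 := dn k u
    set s2 := sn k (u+w); set c2 := cn k (u+w); set d2 := dn k (u+w)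
    have e1 : s1^2 + c1^2 = 1 := sn_cn_sq u
    have e2 : s2^2 + c2^2 = 1 := sn_cn_sq (u+w)
    have e3 : d1^2 = 1 - k^2 * s1^2 := dn_sq hk u
    have e4 : d2^2 = 1 - k^2 * s2^2 := dn_sq hk (u+w)
    constructor
    · have h := hC.div hB hBne
      refine h.congr_deriv ?_
      rw [div_eq_zero_iff]
      left
      simp only [hBdef, Pi.mul_apply, Pi.add_apply]
      linear_combination (2*k^2*s1*d1*s2^2*c2) * e1 + (2*k^2*s1^2*c1*s2*d2) * e2 +
        (c1*s2*d2 + k^2*s1^2*c1*s2^3*d2) * e3 + (s1*d1*c2 + k^2*s1^3*d1*s2^2*c2) * e4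
    · have h := hD.div hB hBne
      refine h.congr_deriv ?_
      rw [div_eq_zero_iff]
      left
      simp only [hBdef, Pi.mul_apply, Pi.add_apply]
      linear_combination (k^2*d1*s2*c2 + k^4*s1^2*d1*s2^3*c2) * e1 +
        (k^2*s1*c1*d2 + k^4*s1^3*c1*s2^2*d2) * e2 +
        (2*k^2*s1*c1*s2^2*d2) * e3 + (2*k^2*s1^2*d1*s2*c2) * e4
  have hC0 : C 0 = cn k w := by simp [hCdef, sn_zero hk, cn_zero hk, dn_zero hk]
  have hD0 : D 0 = dn k w := by simp [hDdef, sn_zero hk, cn_zero hk, dn_zero hk]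
  constructor
  · have := main C (fun x => (derivs x).1) u
    rwa [hC0] at this
  · have := main D (fun x => (derivs x).2) u
    rwa [hD0] at this

lemma add_identity (u v : ℝ) :
    cn k u * cn k v + sn k u * sn k v * dn k (v - u) = cn k (v - u) := by
  obtain ⟨h1, h2⟩ := cn_dn_add hk (v - u) u
  rw [show u + (v - u) = v by ring] at h1 h2
  have hB := Bsn_pos hk u v
  have hmul : (cn k u * cn k v + sn k u * sn k v * dn k (v - u) - cn k (v - u)) *
      (1 - k^2 * sn k u ^ 2 * sn k v ^ 2) = 0 := by
    linear_combination h1 - (sn k u * sn k v) * h2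
  rcases mul_eq_zero.1 hmul with h | h
  · linarith
  · linarith

lemma g_add_pi (θ : ℝ) : g k (θ + Real.pi) = g k θ + g k Real.pi := by
  have hper : Function.Periodic (fun t : ℝ => 1 / Real.sqrt (1 - k^2 * Real.sin t ^ 2)) Real.pi := by
    intro t
    simp [Real.sin_add_pi]
  have hint := hper.intervalIntegral_add_eq θ 0
  simp only [zero_add] at hint
  have hsplit : g k (θ + Real.pi) = g k θ + ∫ t in θ..(θ + Real.pi),
      1 / Real.sqrt (1 - k^2 * Real.sin t ^ 2) := by
    rw [g, g, ← intervalIntegral.integral_add_adjacent_intervals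
      ((integrand_cont hk).intervalIntegrable 0 θ)
      ((integrand_cont hk).intervalIntegrable θ (θ + Real.pi))]
  rw [hsplit, hint]
  rfl

lemma theta_lt (θ θ' α : ℝ) (hα : α ∈ Set.Ioo (0:ℝ) (Real.pi/2))
    (h : g k θ' = g k θ + g k α) : θ < θ' ∧ θ' < θ + Real.pi := by
  have hmono := g_strictMono hk
  have h0 : g k 0 < g k α := hmono hα.1
  rw [g_zero] at h0
  constructor
  · have : g k θ < g k θ' := by linarith
    exact hmono.lt_iff_lt.1 this
  · have hup : g k α < g k Real.pi := by
      have := hmono (show α < Real.pi by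
        have := Real.pi_pos; have := hα.2; linarith)
      exact this
    have : g k θ' < g k (θ + Real.pi) := by
      rw [g_add_pi hk]; linarith
    exact hmono.lt_iff_lt.1 this

end analysis

open Complex

lemma expi_re (φ : ℝ) : (Complex.exp (Complex.I * (φ:ℂ))).re = Real.cos φ := by
  rw [mul_comm, Complex.exp_ofReal_mul_I_re]

lemma expi_im (φ : ℝ) : (Complex.exp (Complex.I * (φ:ℂ))).im = Real.sin φ := by
  rw [mul_comm, Complex.exp_ofReal_mul_I_im]

lemma conj_expi (φ : ℝ) : (starRingEnd ℂ) (Complex.exp (Complex.I * (φ:ℂ))) =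
    Complex.exp (Complex.I * ((-φ : ℝ) : ℂ)) := by
  rw [← Complex.exp_conj]
  congr 1
  simp [Complex.conj_ofReal]

lemma chord_dist (θ θ' : ℝ) (h1 : θ < θ') (h2 : θ' < θ + Real.pi) (p : ℝ) :
    Metric.infDist ((p : ℂ))
      (affineSpan ℝ {Complex.exp (2*Complex.I*θ), Complex.exp (2*Complex.I*θ')} : Set ℂ) =
      |Real.cos (θ - θ') - p * Real.cos (θ + θ')| := by
  have hz1 : Complex.exp (2*Complex.I*θ) = Complex.exp (Complex.I * ((θ + θ' : ℝ):ℂ)) *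
      Complex.exp (Complex.I * ((θ - θ' : ℝ):ℂ)) := by
    rw [← Complex.exp_add]; congr 1; push_cast; ring
  have hz2 : Complex.exp (2*Complex.I*θ') = Complex.exp (Complex.I * ((θ + θ' : ℝ):ℂ)) *
      Complex.exp (Complex.I * ((θ' - θ : ℝ):ℂ)) := by
    rw [← Complex.exp_add]; congr 1; push_cast; ring
  set n : ℂ := Complex.exp (Complex.I * ((θ + θ' : ℝ):ℂ)) with hn
  set z₁ : ℂ := Complex.exp (2*Complex.I*θ) with hz1d
  set z₂ : ℂ := Complex.exp (2*Complex.I*θ') with hz2d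
  set r : ℝ := Real.cos (θ - θ') - p * Real.cos (θ + θ') with hr
  set σ : ℝ := Real.sin (θ' - θ) with hσd
  have hσ : 0 < σ := Real.sin_pos_of_pos_of_lt_pi (by linarith) (by linarith)
  have hnc : (starRingEnd ℂ) n * n = 1 := by
    rw [hn, conj_expi, ← Complex.exp_add, ← Complex.exp_zero]
    congr 1
    push_cast
    ring
  have hq1 : (starRingEnd ℂ) n * z₁ = Complex.exp (Complex.I * ((θ - θ' : ℝ):ℂ)) := by
    rw [hz1, ← mul_assoc, hnc, one_mul]
  have hq2 : (starRingEnd ℂ) n * z₂ = Complex.exp (Complex.I * ((θ' - θ : ℝ):ℂ)) := by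
    rw [hz2, ← mul_assoc, hnc, one_mul]
  have hq1re : ((starRingEnd ℂ) n * z₁).re = Real.cos (θ - θ') := by rw [hq1, expi_re]
  have hq2re : ((starRingEnd ℂ) n * z₂).re = Real.cos (θ - θ') := by
    rw [hq2, expi_re, show (θ' - θ) = -(θ - θ') by ring, Real.cos_neg]
  have hqcre : ((starRingEnd ℂ) n * (p : ℂ)).re = p * Real.cos (θ + θ') := by
    rw [hn, conj_expi, mul_comm, Complex.re_ofReal_mul, expi_re, Real.cos_neg]
  have hdiff : z₂ - z₁ = ((2 * σ : ℝ) : ℂ) * (n * Complex.I) := by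
    rw [hz1, hz2, ← mul_sub]
    have : Complex.exp (Complex.I * ((θ' - θ : ℝ):ℂ)) - Complex.exp (Complex.I * ((θ - θ' : ℝ):ℂ))
        = ((2 * σ : ℝ) : ℂ) * Complex.I := by
      apply Complex.ext
      · rw [Complex.sub_re, expi_re, expi_re, show (θ - θ') = -(θ' - θ) by ring, Real.cos_neg]
        simp
      · rw [Complex.sub_im, expi_im, expi_im, show (θ - θ') = -(θ' - θ) by ring, Real.sin_neg]
        simp [Complex.mul_im]
        rw [hσd]
        ring
    rw [this]
    ring
  have habs_n : ‖n‖ = 1 := by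
    rw [hn, Complex.norm_exp]
    simp
  have hmem_iff : ∀ z : ℂ, z ∈ (affineSpan ℝ {z₁, z₂} : Set ℂ) ↔
      ∃ t : ℝ, z = z₁ + t • (z₂ - z₁) := by
    intro z
    constructor
    · intro hz
      have heq : z = (z - z₁) +ᵥ z₁ := by simp
      rw [heq, SetLike.mem_coe] at hz
      obtain ⟨t, ht⟩ := (vadd_left_mem_affineSpan_pair).1 hz
      rw [vsub_eq_sub] at ht
      refine ⟨t, ?_⟩
      rw [Complex.real_smul] at ht ⊢
      linear_combination -ht
    · rintro ⟨t, rfl⟩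
      have hlm := AffineMap.lineMap_mem_affineSpan_pair (k := ℝ) t z₁ z₂
      rw [SetLike.mem_coe]
      convert hlm using 1
      rw [AffineMap.lineMap_apply, vsub_eq_sub, vadd_eq_add]
      ring
  have hlow : ∀ z ∈ (affineSpan ℝ {z₁, z₂} : Set ℂ), |r| ≤ dist (p:ℂ) z := by
    intro z hz
    obtain ⟨t, rfl⟩ := (hmem_iff z).1 hz
    have hre : ((starRingEnd ℂ) n * ((p:ℂ) - (z₁ + t • (z₂ - z₁)))).re = -r := by
      have expand : (starRingEnd ℂ) n * ((p:ℂ) - (z₁ + t • (z₂ - z₁)))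
          = (starRingEnd ℂ) n * (p:ℂ) - (starRingEnd ℂ) n * z₁
            - (t:ℂ) * ((starRingEnd ℂ) n * z₂ - (starRingEnd ℂ) n * z₁) := by
        rw [Complex.real_smul]
        ring
      rw [expand]
      simp only [Complex.sub_re, hqcre, hq1re, Complex.re_ofReal_mul, hq2re]
      rw [hr]; ring
    calc |r| = |((starRingEnd ℂ) n * ((p:ℂ) - (z₁ + t • (z₂ - z₁)))).re| := by rw [hre, abs_neg]
    _ ≤ ‖(starRingEnd ℂ) n * ((p:ℂ) - (z₁ + t • (z₂ - z₁)))‖ :=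
        Complex.abs_re_le_norm _
    _ = ‖(p:ℂ) - (z₁ + t • (z₂ - z₁))‖ := by
        rw [norm_mul, Complex.norm_conj, habs_n, one_mul]
    _ = dist (p:ℂ) (z₁ + t • (z₂ - z₁)) := by rw [Complex.dist_eq]
  set w : ℂ := (p:ℂ) + (r:ℂ) * n - z₁ with hw
  set y : ℝ := ((starRingEnd ℂ) n * w).im with hy
  have hwre : ((starRingEnd ℂ) n * w).re = 0 := by
    have expand : (starRingEnd ℂ) n * w
        = (starRingEnd ℂ) n * (p:ℂ) + (r:ℂ) * ((starRingEnd ℂ) n * n)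
          - (starRingEnd ℂ) n * z₁ := by rw [hw]; ring
    rw [expand, hnc, mul_one]
    simp only [Complex.sub_re, Complex.add_re, hqcre, hq1re, Complex.ofReal_re]
    rw [hr]; ring
  have hcw : (starRingEnd ℂ) n * w = (y:ℂ) * Complex.I := by
    apply Complex.ext
    · simp [hwre]
    · simp [hy]
  have hwI : w = (y : ℝ) • (n * Complex.I) :=
    calc w = n * ((starRingEnd ℂ) n * w) := by rw [← mul_assoc, mul_comm n, hnc, one_mul]
    _ = n * ((y:ℂ) * Complex.I) := by rw [hcw]
    _ = (y : ℝ) • (n * Complex.I) := by rw [Complex.real_smul]; ring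
  set t₀ : ℝ := y / (2 * σ) with ht₀
  have hσC : ((2 * σ : ℝ) : ℂ) ≠ 0 := Complex.ofReal_ne_zero.2 (by positivity)
  have hts : (t₀ : ℝ) • (z₂ - z₁) = w := by
    rw [hdiff, hwI, Complex.real_smul, Complex.real_smul, ht₀]
    rw [← mul_assoc]
    congr 1
    rw [show ((y / (2 * σ) : ℝ) : ℂ) = (y:ℂ) / ((2 * σ : ℝ):ℂ) by push_cast; ring]
    have h2σ : ((2 * σ : ℝ):ℂ) ≠ 0 := hσC
    field_simp
  have hfoot_mem : (p:ℂ) + (r:ℂ) * n ∈ (affineSpan ℝ {z₁, z₂} : Set ℂ) := by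
    rw [hmem_iff]
    refine ⟨t₀, ?_⟩
    rw [hts, hw]
    ring
  have hfoot_dist : dist (p:ℂ) ((p:ℂ) + (r:ℂ) * n) = |r| := by
    rw [Complex.dist_eq]
    have : (p:ℂ) - ((p:ℂ) + (r:ℂ) * n) = -((r:ℂ) * n) := by ring
    rw [this, norm_neg, norm_mul, habs_n, mul_one, Complex.norm_real, Real.norm_eq_abs]
  apply le_antisymm
  · calc Metric.infDist (p:ℂ) (affineSpan ℝ {z₁, z₂} : Set ℂ)
        ≤ dist (p:ℂ) ((p:ℂ) + (r:ℂ) * n) := Metric.infDist_le_dist_of_mem hfoot_mem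
    _ = |r| := hfoot_dist
  · rw [Metric.infDist_eq_iInf]
    have hne : Nonempty (affineSpan ℝ {z₁, z₂} : Set ℂ) :=
      ⟨⟨z₁, left_mem_affineSpan_pair ℝ z₁ z₂⟩⟩
    exact le_ciInf fun z => hlow z z.2

theorem stmt_13 (k : ℝ) (hk : k ∈ Set.Ioo (0:ℝ) 1)
    (α : ℝ) (hα : α ∈ Set.Ioo (0:ℝ) (Real.pi/2)) (a : ℝ) (ha : a = g k α)
    (θ θ' : ℝ) (hθ' : g k θ' = g k θ + a)
    (z₁ z₂ : ℂ) (hz₁ : z₁ = Complex.exp (2 * Complex.I * θ))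
    (hz₂ : z₂ = Complex.exp (2 * Complex.I * θ')) :
    Metric.infDist (((dn k a - 1) / (dn k a + 1) : ℝ) : ℂ) (affineSpan ℝ {z₁, z₂} : Set ℂ) =
      2 * cn k a / (dn k a + 1) := by
  have hk2 : k^2 < 1 := by nlinarith [hk.1, hk.2]
  have hamA : am k a = α := by rw [ha, am_g hk2]
  have hcnA : cn k a = Real.cos α := by rw [cn, hamA]
  have hsnA : sn k a = Real.sin α := by rw [sn, hamA]
  have hcosA : 0 < Real.cos α := Real.cos_pos_of_mem_Ioo
    ⟨by linarith [hα.1, Real.pi_pos], hα.2⟩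
  have hD0 : 0 < dn k a := dn_pos hk2 a
  have hD1 : 0 < dn k a + 1 := by linarith
  -- order facts
  have horder := theta_lt hk2 θ θ' α hα (by rw [hθ', ha])
  -- the addition identity at u = g θ, v = g θ'
  have hkey := add_identity hk2 (g k θ) (g k θ')
  rw [show g k θ' - g k θ = a by rw [hθ']; ring, cn, cn, sn, sn, am_g hk2, am_g hk2] at hkey
  -- hkey : cos θ * cos θ' + sin θ * sin θ' * dn k a = cn k a
  rw [hz₁, hz₂, chord_dist θ θ' horder.1 horder.2]
  set D : ℝ := dn k a with hDd
  set p : ℝ := (D - 1) / (D + 1) with hp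
  have hX : Real.cos (θ - θ') - p * Real.cos (θ + θ')
      = 2 * (Real.cos θ * Real.cos θ' + Real.sin θ * Real.sin θ' * D) / (D + 1) := by
    rw [Real.cos_sub, Real.cos_add, hp]
    field_simp
    ring
  rw [hX, hkey, hcnA]
  exact abs_of_nonneg (by positivity)
end

section
/- In the group (−K, K] under addition mod 2K, an element a ∈ (0, K) has order n ≥ 3 if and only if na = 2hK for some positive integer h with gcd(h, n) = 1 and 2h < n; the unique element of order 2 is K. Consequently, an interscribed n-gon to T and C_a exists iff ∫₀^α dt/√(1 − k² sin² t) = (h/n) ∫₀^π dt/√(1 − k² sin² t) with gcd(h,n)=1 (Jacobi's condition). -/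
/-- `a` has order `n` in the group `(-K, K]` with addition modulo `2K`:
`n·a ≡ 0 (mod 2K)` and no smaller positive multiple of `a` is `≡ 0 (mod 2K)`. -/
def hasOrder (K a : ℝ) (n : ℕ) : Prop :=
  (∃ m : ℤ, (n : ℝ) * a = 2 * K * m) ∧
  ∀ j : ℕ, 0 < j → j < n → ¬ ∃ m : ℤ, (j : ℝ) * a = 2 * K * m

section aux
variable {k : ℝ} (hk : k ∈ Set.Ioo (0:ℝ) 1)

lemma f_pos (hk : k ∈ Set.Ioo (0:ℝ) 1) (t : ℝ) :
    0 < 1 / Real.sqrt (1 - k^2 * Real.sin t ^ 2) := by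
  have h1 : k^2 * Real.sin t ^ 2 ≤ k^2 * 1 := by
    have := Real.sin_sq_le_one t
    nlinarith [sq_nonneg k]
  have h2 : (0:ℝ) < 1 - k^2 * Real.sin t ^ 2 := by nlinarith [hk.1, hk.2]
  positivity

lemma f_cont (hk : k ∈ Set.Ioo (0:ℝ) 1) :
    Continuous fun t => 1 / Real.sqrt (1 - k^2 * Real.sin t ^ 2) := by
  apply Continuous.div continuous_const
  · exact (Real.continuous_sqrt.comp (by continuity))
  · intro t
    have := f_pos hk t
    intro h
    rw [h] at this
    simp at this

lemma g_lt_g (hk : k ∈ Set.Ioo (0:ℝ) 1) {α β : ℝ} (hαβ : α < β) : g k α < g k β := by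
  have hint : ∀ a b : ℝ, IntervalIntegrable
      (fun t => 1 / Real.sqrt (1 - k^2 * Real.sin t ^ 2)) MeasureTheory.volume a b :=
    fun a b => (f_cont hk).intervalIntegrable a b
  have key : g k β = g k α + ∫ t in α..β, 1 / Real.sqrt (1 - k^2 * Real.sin t ^ 2) :=
    (intervalIntegral.integral_add_adjacent_intervals (hint 0 α) (hint α β)).symm
  have hpos : 0 < ∫ t in α..β, 1 / Real.sqrt (1 - k^2 * Real.sin t ^ 2) :=
    intervalIntegral.intervalIntegral_pos_of_pos (hint α β) (f_pos hk) hαβ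
  linarith

lemma KK_pos (hk : k ∈ Set.Ioo (0:ℝ) 1) : 0 < KK k := by
  have h0 : g k 0 = 0 := by simp [g]
  have := g_lt_g hk (show (0:ℝ) < Real.pi/2 by positivity)
  rw [h0] at this; exact this

lemma g_pi (hk : k ∈ Set.Ioo (0:ℝ) 1) : g k Real.pi = 2 * KK k := by
  have hint : ∀ a b : ℝ, IntervalIntegrable
      (fun t => 1 / Real.sqrt (1 - k^2 * Real.sin t ^ 2)) MeasureTheory.volume a b :=
    fun a b => (f_cont hk).intervalIntegrable a b
  have split : g k Real.pi = KK k + ∫ t in (Real.pi/2)..Real.pi,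
      1 / Real.sqrt (1 - k^2 * Real.sin t ^ 2) :=
    (intervalIntegral.integral_add_adjacent_intervals (hint 0 (Real.pi/2))
      (hint (Real.pi/2) Real.pi)).symm
  have sym : (∫ t in (Real.pi/2)..Real.pi, 1 / Real.sqrt (1 - k^2 * Real.sin t ^ 2))
      = KK k := by
    have h1 := intervalIntegral.integral_comp_sub_left
      (fun t => 1 / Real.sqrt (1 - k^2 * Real.sin t ^ 2)) Real.pi (a := 0) (b := Real.pi/2)
    simp only [Real.sin_pi_sub, sub_zero] at h1
    rw [show Real.pi - Real.pi/2 = Real.pi/2 from by ring] at h1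
    rw [← h1]; rfl
  rw [split, sym]; ring

lemma order_iff {K a : ℝ} (hK : 0 < K) (ha : a ∈ Set.Ioo 0 K) {n : ℕ} (hn : 3 ≤ n) :
    hasOrder K a n ↔
      ∃ h : ℕ, 0 < h ∧ Nat.gcd h n = 1 ∧ 2 * h < n ∧ (n : ℝ) * a = 2 * h * K := by
  have hn0 : 0 < n := by omega
  constructor
  · rintro ⟨⟨m, hm⟩, hmin⟩
    have hna : 0 < (n:ℝ) * a := by
      have : (0:ℝ) < n := by exact_mod_cast hn0
      exact mul_pos this ha.1
    have hm0 : 0 < m := by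
      by_contra hc
      push_neg at hc
      have : (m:ℝ) ≤ 0 := by exact_mod_cast hc
      nlinarith
    have h2m : 2 * m < n := by
      have hnK : (n:ℝ) * a < n * K := by
        have : (0:ℝ) < n := by exact_mod_cast hn0
        nlinarith [ha.2]
      have : (2:ℝ) * m < n := by nlinarith
      exact_mod_cast this
    refine ⟨m.toNat, by omega, ?_, by omega, ?_⟩
    · by_contra hd
      set d := Nat.gcd m.toNat n with hdd
      have hd0 : 0 < d := Nat.gcd_pos_of_pos_right _ hn0
      have hd2 : 2 ≤ d := by omega
      obtain ⟨n', hn'⟩ := Nat.gcd_dvd_right m.toNat n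
      obtain ⟨h', hh'⟩ := Nat.gcd_dvd_left m.toNat n
      have hn'0 : 0 < n' := by
        rcases Nat.eq_zero_or_pos n' with h | h
        · subst h; simp at hn'; omega
        · exact h
      have hn'n : n' < n := by
        calc n' < 2 * n' := by omega
        _ ≤ d * n' := by exact Nat.mul_le_mul_right n' hd2
        _ = n := hn'.symm
      refine hmin n' hn'0 hn'n ⟨(h' : ℤ), ?_⟩
      have hmt : ((m.toNat:ℕ):ℝ) = (m:ℝ) := by exact_mod_cast Int.toNat_of_nonneg hm0.le
      have hmr : (m:ℝ) = (d:ℝ) * h' := by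
        rw [← hmt, hh']; push_cast; ring
      have hnr : (n:ℝ) = (d:ℝ) * n' := by rw [hn']; push_cast; ring
      have hd0' : (d:ℝ) ≠ 0 := by positivity
      have : (d:ℝ) * (n' * a) = (d:ℝ) * (2 * K * h') := by
        rw [hnr, hmr] at hm; push_cast at hm ⊢; ring_nf at hm ⊢; linarith
      have := mul_left_cancel₀ hd0' this
      push_cast
      linarith
    · rw [hm]
      have : (m.toNat : ℝ) = (m : ℝ) := by exact_mod_cast Int.toNat_of_nonneg hm0.le
      rw [this]; ring
  · rintro ⟨h, hh0, hgcd, h2n, heq⟩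
    constructor
    · exact ⟨(h:ℤ), by push_cast; linarith⟩
    · rintro j hj hjn ⟨m, hm⟩
      have hn0' : (n:ℝ) ≠ 0 := by positivity
      have ha' : a = 2 * h * K / n := by field_simp at heq ⊢; linarith
      have hjh : (j:ℝ) * h = (m:ℝ) * n := by
        rw [ha'] at hm
        have hK' : K ≠ 0 := ne_of_gt hK
        field_simp at hm
        nlinarith [hm]
      have hjh' : (j:ℤ) * h = m * n := by exact_mod_cast hjh
      have hdvd : (n:ℤ) ∣ (j:ℤ) * h := ⟨m, by linarith [hjh']⟩
      have hdvdn : n ∣ j * h := by exact_mod_cast hdvd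
      have hco : Nat.Coprime n h := (Nat.coprime_comm.mp hgcd)
      have : n ∣ j := hco.dvd_of_dvd_mul_right hdvdn
      have := Nat.le_of_dvd hj this
      omega

end aux

theorem stmt_17 (k : ℝ) (hk : k ∈ Set.Ioo (0:ℝ) 1) :
    -- order `n ≥ 3` characterization
    (∀ a ∈ Set.Ioo (0:ℝ) (KK k), ∀ n : ℕ, 3 ≤ n →
      (hasOrder (KK k) a n ↔
        ∃ h : ℕ, 0 < h ∧ Nat.gcd h n = 1 ∧ 2 * h < n ∧ (n : ℝ) * a = 2 * h * KK k)) ∧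
    -- `K` is the unique element of order `2`
    hasOrder (KK k) (KK k) 2 ∧
    (∀ a ∈ Set.Ioc (-KK k) (KK k), hasOrder (KK k) a 2 → a = KK k) ∧
    -- Jacobi's condition: an interscribed `n`-gon to `T` and `C_{g α}` exists
    -- (i.e. `g α` has order `n`) iff `g(α) = (h/n) g(π)` with `gcd(h,n) = 1`
    (∀ α ∈ Set.Ioo (0:ℝ) (Real.pi/2), ∀ n : ℕ, 3 ≤ n →
      (hasOrder (KK k) (g k α) n ↔
        ∃ h : ℕ, 0 < h ∧ Nat.gcd h n = 1 ∧ g k α = ((h : ℝ) / n) * g k Real.pi)) := by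
  have hK := KK_pos hk
  refine ⟨fun a ha n hn => order_iff hK ha hn, ?_, ?_, ?_⟩
  · constructor
    · exact ⟨1, by push_cast; ring⟩
    · rintro j hj hjn ⟨m, hm⟩
      interval_cases j
      have : (1:ℝ) = 2 * m := by
        have hK' : KK k ≠ 0 := ne_of_gt hK
        field_simp at hm
        push_cast at hm
        nlinarith
      have : (2:ℝ) * m ≠ 1 := by
        rcases le_or_gt m 0 with h | h
        · have : (m:ℝ) ≤ 0 := by exact_mod_cast h
          nlinarith
        · have : (1:ℝ) ≤ m := by exact_mod_cast h
          nlinarith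
      exact this (by linarith)
  · rintro a ha ⟨⟨m, hm⟩, hmin⟩
    push_cast at hm
    have ham : a = KK k * m := by linarith
    have hm1 : m = 1 := by
      by_contra hc
      rcases lt_trichotomy m 0 with h | h | h
      · have hm1 : m ≤ -1 := by omega
        have : (m:ℝ) ≤ -1 := by exact_mod_cast hm1
        nlinarith [ha.1]
      · subst h
        refine hmin 1 one_pos one_lt_two ⟨0, ?_⟩
        simp [ham]
      · have h2 : 2 ≤ m := by omega
        have : (2:ℝ) ≤ m := by exact_mod_cast h2
        nlinarith [ha.2]
    rw [ham, hm1]; simp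
  · intro α hα n hn
    have hga : g k α ∈ Set.Ioo 0 (KK k) := by
      constructor
      · have h0 : g k 0 = 0 := by simp [g]
        have := g_lt_g hk hα.1
        rwa [h0] at this
      · exact g_lt_g hk hα.2
    rw [order_iff hK hga hn]
    have hgpi := g_pi hk
    have hn0 : (0:ℝ) < n := by exact_mod_cast (show 0 < n by omega)
    constructor
    · rintro ⟨h, hh0, hgcd, h2n, heq⟩
      refine ⟨h, hh0, hgcd, ?_⟩
      rw [hgpi]
      field_simp
      linarith
    · rintro ⟨h, hh0, hgcd, heq⟩
      rw [hgpi] at heq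
      have heq' : (n:ℝ) * g k α = 2 * h * KK k := by
        field_simp at heq; linarith
      refine ⟨h, hh0, hgcd, ?_, heq'⟩
      have : (2:ℝ) * h * KK k < n * KK k := by
        calc (2:ℝ) * h * KK k = n * g k α := heq'.symm
        _ < n * KK k := by nlinarith [hga.2]
      have : (2:ℝ) * h < n := by nlinarith
      exact_mod_cast this
end
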